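/- arXiv:2503.10467 — 2 statements merged into one kernel-verified Lean document; each statement's English description precedes it below -/
import Mathlib

section
/- Riesz–Kantorovich formula for pointwise join of linear maps: if J₁, J₂ are cones with joins and L₁, L₂: J₁ → J₂ are additive and positively homogeneous, then the map L defined by L(v) := sup{L₁(v₁) + L₂(v₂) : v₁ + v₂ = v} is additive and positively homogeneous, and is the least linear upper bound of L₁ and L₂ in the pointwise order. -/
/-!
Everything except additivity of `L` is formal. For `L v + L w ≤ L (v + w)` one needs addition in `J₂` to distribute over suprema. This follows
from approximate cancellation (`x + y ≤ x + w` gives `y ≤ w + ε • x` for every `ε > 0`, by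
iterating and rescaling) together with `v = sup_{η < 1} η • v`. For the reverse inequality, a
decomposition in `J₁` built from `u₁ ⊓ a` and a least complement (both exist because addition
distributes over infima) gives `L (a + b) ≤ L a + L (b + εa)` with `εa = inf_{ε > 0} ε • a`.
Applied twice this yields `L (v + w) ≤ L v + L w + L (εv + εw)`, and the error term is absorbed
since `y + εy = y`.
-/

open scoped NNReal

/-- A map between wedges is (cone-)linear if it preserves nonnegative linear combinations. -/
def IsConeLinear {J₁ J₂ : Type*} [AddCommMonoid J₁] [Module ℝ≥0 J₁]
    [AddCommMonoid J₂] [Module ℝ≥0 J₂] (L : J₁ → J₂) : Prop :=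
  ∀ (a b : ℝ≥0) (v w : J₁), L (a • v + b • w) = a • L v + b • L w

def AddSInfDistrib (J : Type*) [AddCommMonoid J] [InfSet J] : Prop :=
  ∀ (v : J) (A : Set J), sInf ((fun a => v + a) '' A) = v + sInf A

def SMulLowerContinuous (J : Type*) [Preorder J] [SMul ℝ≥0 J] : Prop :=
  ∀ v : J, IsLUB {w | ∃ η : ℝ≥0, η < 1 ∧ w = η • v} v

section OrderedCone

variable {J : Type*} [AddCommMonoid J] [PartialOrder J]

theorem CanonicallyOrderedAdd.of_le_iff_exists_add (hle : ∀ x y : J, x ≤ y ↔ ∃ z, x + z = y) :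
    CanonicallyOrderedAdd J where
  exists_add_of_le h := let ⟨z, hz⟩ := (hle _ _).1 h; ⟨z, hz.symm⟩
  le_add_self a b := (hle _ _).2 ⟨b, add_comm a b⟩
  le_self_add _ b := (hle _ _).2 ⟨b, rfl⟩

theorem IsOrderedModule.of_canonicallyOrderedAdd (R : Type*) [Semiring R] [PartialOrder R]
    [CanonicallyOrderedAdd R] [Module R J] [CanonicallyOrderedAdd J] : IsOrderedModule R J where
  smul_le_smul_of_nonneg_left _ _ b₁ b₂ hb := by
    obtain ⟨c, rfl⟩ := exists_add_of_le hb
    rw [smul_add]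
    exact le_self_add
  smul_le_smul_of_nonneg_right b _ a₁ a₂ ha := by
    obtain ⟨c, rfl⟩ := exists_add_of_le ha
    rw [add_smul]
    exact le_self_add

variable [IsOrderedAddMonoid J]

theorem add_nsmul_le_add_nsmul {x y w : J} (h : x + y ≤ x + w) (n : ℕ) :
    x + n • y ≤ x + n • w := by
  induction n with
  | zero => simp
  | succ n ih =>
    calc x + (n + 1) • y = (x + n • y) + y := by rw [succ_nsmul]; abel
      _ ≤ (x + n • w) + y := by gcongr
      _ = (x + y) + n • w := by abel
      _ ≤ (x + w) + n • w := by gcongr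
      _ = x + (n + 1) • w := by rw [succ_nsmul]; abel

variable [CanonicallyOrderedAdd J] [Module ℝ≥0 J] [IsOrderedModule ℝ≥0 J]

theorem le_add_smul_of_add_le_add {x y w : J} (h : x + y ≤ x + w) {ε : ℝ≥0} (hε : 0 < ε) :
    y ≤ w + ε • x := by
  obtain ⟨n, hn⟩ := exists_nat_gt ε⁻¹
  have hn₀ : (n : ℝ≥0) ≠ 0 := (hn.trans_le' zero_le).ne'
  have key := smul_le_smul_of_nonneg_left (add_nsmul_le_add_nsmul h n)
    (zero_le : 0 ≤ (n : ℝ≥0)⁻¹)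
  rw [smul_add, smul_add, ← Nat.cast_smul_eq_nsmul ℝ≥0, ← Nat.cast_smul_eq_nsmul ℝ≥0,
    inv_smul_smul₀ hn₀, inv_smul_smul₀ hn₀] at key
  calc y ≤ (n : ℝ≥0)⁻¹ • x + y := le_add_self
    _ ≤ (n : ℝ≥0)⁻¹ • x + w := key
    _ ≤ ε • x + w := by gcongr; exact inv_le_of_inv_le₀ hε hn.le
    _ = w + ε • x := add_comm _ _

theorem SMulLowerContinuous.le_of_forall_pos_le_add_smul (hscale : SMulLowerContinuous J)
    {x y z : J} (hzy : z ≤ y) (h : ∀ ε : ℝ≥0, 0 < ε → x ≤ y + ε • z) : x ≤ y := by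
  refine (hscale x).2 ?_
  rintro _ ⟨η, hη, rfl⟩
  calc η • x ≤ η • (y + (1 - η) • z) := by gcongr; exact h _ (tsub_pos_of_lt hη)
    _ = η • y + (η * (1 - η)) • z := by rw [smul_add, smul_smul]
    _ ≤ η • y + (1 - η) • y := by
      gcongr η • y + ?_
      exact smul_le_smul (mul_le_of_le_one_left zero_le hη.le) hzy zero_le zero_le
    _ = y := by rw [← add_smul, add_tsub_cancel_of_le hη.le, one_smul]

end OrderedCone

section InfinitesimalPart

variable {J : Type*} [CompleteLattice J] [AddCommMonoid J] [Module ℝ≥0 J]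

/-- The paper's `εx`. -/
def infinitesimalPart (x : J) : J :=
  ⨅ ε : {ε : ℝ≥0 // 0 < ε}, (ε : ℝ≥0) • x

theorem infinitesimalPart_le_smul (x : J) {ε : ℝ≥0} (hε : 0 < ε) :
    infinitesimalPart x ≤ ε • x :=
  iInf_le (fun ε : {ε : ℝ≥0 // 0 < ε} => (ε : ℝ≥0) • x) ⟨ε, hε⟩

theorem le_infinitesimalPart {x y : J} (h : ∀ ε : ℝ≥0, 0 < ε → y ≤ ε • x) :
    y ≤ infinitesimalPart x :=
  le_iInf fun ε => h ε ε.2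

theorem infinitesimalPart_smul_le {c : ℝ≥0} (hc : c ≠ 0) (x : J) :
    infinitesimalPart (c • x) ≤ infinitesimalPart x :=
  le_infinitesimalPart fun ε hε => by
    simpa [smul_smul, hc] using infinitesimalPart_le_smul (c • x) (div_pos hε (pos_of_ne_zero hc))

theorem infinitesimalPart_smul {c : ℝ≥0} (hc : c ≠ 0) (x : J) :
    infinitesimalPart (c • x) = infinitesimalPart x := by
  refine le_antisymm (infinitesimalPart_smul_le hc x) ?_
  simpa [inv_smul_smul₀ hc] using infinitesimalPart_smul_le (inv_ne_zero hc) (c • x)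

theorem infinitesimalPart_add_le [IsOrderedAddMonoid J] (x y : J) :
    infinitesimalPart x + infinitesimalPart y ≤ infinitesimalPart (x + y) :=
  le_infinitesimalPart fun ε hε => smul_add ε x y ▸
    add_le_add (infinitesimalPart_le_smul x hε) (infinitesimalPart_le_smul y hε)

theorem infinitesimalPart_mono [PosSMulMono ℝ≥0 J] : Monotone (infinitesimalPart (J := J)) :=
  fun _ _ hxy => le_infinitesimalPart fun _ hε =>
    (infinitesimalPart_le_smul _ hε).trans (by gcongr)

theorem Monotone.map_infinitesimalPart_le {K : Type*} [CompleteLattice K] [AddCommMonoid K]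
    [Module ℝ≥0 K] {f : J → K} (hf : Monotone f) (hsmul : ∀ (c : ℝ≥0) x, f (c • x) = c • f x)
    (x : J) : f (infinitesimalPart x) ≤ infinitesimalPart (f x) :=
  le_infinitesimalPart fun _ hε => hsmul _ x ▸ hf (infinitesimalPart_le_smul x hε)

end InfinitesimalPart

section ConeWithJoins

variable {J : Type*} [CompleteLattice J] [AddCommMonoid J]

theorem AddSInfDistrib.add_iInf_eq (hinf : AddSInfDistrib J) {ι : Sort*} (v : J) (f : ι → J) :
    v + ⨅ i, f i = ⨅ i, v + f i := by
  rw [iInf, ← hinf, ← Set.range_comp]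
  rfl

theorem AddSInfDistrib.add_inf_eq (hinf : AddSInfDistrib J) (v a b : J) :
    v + a ⊓ b = (v + a) ⊓ (v + b) := by
  simpa [Set.image_pair] using (hinf v {a, b}).symm

variable [IsOrderedAddMonoid J] [CanonicallyOrderedAdd J]

theorem AddSInfDistrib.exists_add_eq_and_forall_le (hinf : AddSInfDistrib J) {x y : J}
    (h : x ≤ y) : ∃ d, x + d = y ∧ ∀ t, y ≤ x + t → d ≤ t := by
  refine ⟨sInf {t | y ≤ x + t}, le_antisymm ?_ ?_, fun t ht => sInf_le ht⟩
  · obtain ⟨d, rfl⟩ := exists_add_of_le h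
    gcongr
    exact sInf_le le_rfl
  · rw [← hinf]
    exact le_sInf (by rintro _ ⟨t, ht, rfl⟩; exact ht)

variable [Module ℝ≥0 J] [IsOrderedModule ℝ≥0 J]

theorem SMulLowerContinuous.sSup_add_le (hscale : SMulLowerContinuous J) {A : Set J}
    (hA : A.Nonempty) {b c : J} (h : ∀ a ∈ A, a + b ≤ c) : sSup A + b ≤ c := by
  obtain ⟨a₀, ha₀⟩ := hA
  obtain ⟨w, rfl⟩ := exists_add_of_le (le_add_self.trans (h a₀ ha₀))
  refine hscale.le_of_forall_pos_le_add_smul le_self_add fun ε hε => ?_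
  have hA : sSup A ≤ w + ε • b := sSup_le fun a ha =>
    le_add_smul_of_add_le_add (by rw [add_comm b a]; exact h a ha) hε
  calc sSup A + b ≤ (w + ε • b) + b := by gcongr
    _ = b + w + ε • b := by abel

theorem SMulLowerContinuous.add_infinitesimalPart (hscale : SMulLowerContinuous J) (x : J) :
    x + infinitesimalPart x = x :=
  le_antisymm (hscale.le_of_forall_pos_le_add_smul le_rfl fun _ hε => by
    gcongr; exact infinitesimalPart_le_smul x hε) le_self_add

theorem AddSInfDistrib.le_add_infinitesimalPart (hinf : AddSInfDistrib J) {x y w : J}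
    (h : x + y ≤ x + w) : y ≤ w + infinitesimalPart x := by
  rw [infinitesimalPart, hinf.add_iInf_eq]
  exact le_iInf fun ε => le_add_smul_of_add_le_add h ε.2

theorem AddSInfDistrib.exists_decomposition (hinf : AddSInfDistrib J) {u₁ u₂ a b : J}
    (h : u₁ + u₂ = a + b) :
    ∃ z₁₁ z₁₂ z₂₁ z₂₂ : J, z₁₁ + z₁₂ = u₁ ∧ z₂₁ + z₂₂ = u₂ ∧ z₁₁ + z₂₁ = a ∧
      z₁₂ + z₂₂ ≤ b + infinitesimalPart a := by
  set m := u₁ ⊓ a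
  obtain ⟨z₂₁, hz₂₁, hmin⟩ := hinf.exists_add_eq_and_forall_le (inf_le_right : m ≤ a)
  have hle : z₂₁ ≤ u₂ := hmin u₂ <|
    calc a ≤ (u₂ + u₁) ⊓ (u₂ + a) := le_inf (by rw [add_comm, h]; exact le_self_add) le_add_self
      _ = m + u₂ := by rw [← hinf.add_inf_eq, add_comm]
  obtain ⟨z₁₂, hz₁₂⟩ := exists_add_of_le (inf_le_left : m ≤ u₁)
  obtain ⟨z₂₂, hz₂₂⟩ := exists_add_of_le hle
  refine ⟨m, z₁₂, z₂₁, z₂₂, hz₁₂.symm, hz₂₂.symm, hz₂₁,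
    hinf.le_add_infinitesimalPart (le_of_eq ?_)⟩
  calc a + (z₁₂ + z₂₂) = (m + z₁₂) + (z₂₁ + z₂₂) := by rw [← hz₂₁]; abel
    _ = a + b := by rw [← hz₁₂, ← hz₂₂, h]

end ConeWithJoins

section LinearMap

variable {J₁ J₂ : Type*} [AddCommMonoid J₁] [Module ℝ≥0 J₁] [AddCommMonoid J₂] [Module ℝ≥0 J₂]

theorem isConeLinear_iff_isLinearMap {f : J₁ → J₂} : IsConeLinear f ↔ IsLinearMap ℝ≥0 f :=
  ⟨fun h => ⟨fun x y => by simpa using h 1 1 x y, fun c x => by simpa using h c 0 x x⟩,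
    fun h a b v w => by rw [h.map_add, h.map_smul, h.map_smul]⟩

theorem IsLinearMap.monotone [Preorder J₁] [CanonicallyOrderedAdd J₁] [Preorder J₂]
    [CanonicallyOrderedAdd J₂] {f : J₁ → J₂} (hf : IsLinearMap ℝ≥0 f) : Monotone f := by
  intro x y hxy
  obtain ⟨d, rfl⟩ := exists_add_of_le hxy
  rw [hf.map_add]
  exact le_self_add

end LinearMap

def rieszKantorovich {J₁ J₂ : Type*} [Add J₁] [Add J₂] [SupSet J₂] (L₁ L₂ : J₁ → J₂) (v : J₁) :
    J₂ :=
  sSup {z | ∃ v₁ v₂ : J₁, v₁ + v₂ = v ∧ z = L₁ v₁ + L₂ v₂}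

section RieszKantorovich

variable {J₁ J₂ : Type*} [AddCommMonoid J₁] [CompleteLattice J₂] [AddCommMonoid J₂]
  {L₁ L₂ : J₁ → J₂}

theorem rieszKantorovich_le_iff {v : J₁} {y : J₂} :
    rieszKantorovich L₁ L₂ v ≤ y ↔ ∀ v₁ v₂, v₁ + v₂ = v → L₁ v₁ + L₂ v₂ ≤ y := by
  refine sSup_le_iff.trans ⟨fun h v₁ v₂ hv => h _ ⟨v₁, v₂, hv, rfl⟩, ?_⟩
  rintro h _ ⟨v₁, v₂, hv, rfl⟩
  exact h v₁ v₂ hv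

theorem add_le_rieszKantorovich {v₁ v₂ v : J₁} (h : v₁ + v₂ = v) :
    L₁ v₁ + L₂ v₂ ≤ rieszKantorovich L₁ L₂ v :=
  rieszKantorovich_le_iff.1 le_rfl v₁ v₂ h

variable [Module ℝ≥0 J₁] [Module ℝ≥0 J₂]

theorem le_rieszKantorovich_left (hL₂ : IsLinearMap ℝ≥0 L₂) (v : J₁) :
    L₁ v ≤ rieszKantorovich L₁ L₂ v := by
  simpa [hL₂.map_zero] using add_le_rieszKantorovich (L₁ := L₁) (L₂ := L₂) (add_zero v)

theorem le_rieszKantorovich_right (hL₁ : IsLinearMap ℝ≥0 L₁) (v : J₁) :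
    L₂ v ≤ rieszKantorovich L₁ L₂ v := by
  simpa [hL₁.map_zero] using add_le_rieszKantorovich (L₁ := L₁) (L₂ := L₂) (zero_add v)

theorem rieszKantorovich_le_of_le [IsOrderedAddMonoid J₂] {M : J₁ → J₂}
    (hM : IsLinearMap ℝ≥0 M) (h₁ : ∀ v, L₁ v ≤ M v) (h₂ : ∀ v, L₂ v ≤ M v) (v : J₁) :
    rieszKantorovich L₁ L₂ v ≤ M v :=
  rieszKantorovich_le_iff.2 fun v₁ v₂ h => h ▸ hM.map_add v₁ v₂ ▸ add_le_add (h₁ v₁) (h₂ v₂)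

theorem rieszKantorovich_smul_le [IsOrderedModule ℝ≥0 J₂] (hL₁ : IsLinearMap ℝ≥0 L₁)
    (hL₂ : IsLinearMap ℝ≥0 L₂) {c : ℝ≥0} (hc : c ≠ 0) (v : J₁) :
    rieszKantorovich L₁ L₂ (c • v) ≤ c • rieszKantorovich L₁ L₂ v :=
  rieszKantorovich_le_iff.2 fun v₁ v₂ h => calc
    L₁ v₁ + L₂ v₂ = c • (L₁ (c⁻¹ • v₁) + L₂ (c⁻¹ • v₂)) := by
      rw [smul_add, hL₁.map_smul, hL₂.map_smul, smul_inv_smul₀ hc, smul_inv_smul₀ hc]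
    _ ≤ c • rieszKantorovich L₁ L₂ v := by
      gcongr
      exact add_le_rieszKantorovich (by rw [← smul_add, h, inv_smul_smul₀ hc])

theorem SMulLowerContinuous.rieszKantorovich_add_le [IsOrderedAddMonoid J₂]
    [CanonicallyOrderedAdd J₂] [IsOrderedModule ℝ≥0 J₂] (hscale : SMulLowerContinuous J₂)
    (hL₁ : IsLinearMap ℝ≥0 L₁) (hL₂ : IsLinearMap ℝ≥0 L₂) (v w : J₁) :
    rieszKantorovich L₁ L₂ v + rieszKantorovich L₁ L₂ w ≤ rieszKantorovich L₁ L₂ (v + w) := by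
  show sSup _ + _ ≤ _
  refine hscale.sSup_add_le (by exact ⟨_, v, 0, add_zero v, rfl⟩) ?_
  rintro _ ⟨v₁, v₂, hv, rfl⟩
  rw [add_comm]
  show sSup _ + _ ≤ _
  refine hscale.sSup_add_le (by exact ⟨_, w, 0, add_zero w, rfl⟩) ?_
  rintro _ ⟨w₁, w₂, hw, rfl⟩
  calc L₁ w₁ + L₂ w₂ + (L₁ v₁ + L₂ v₂) = L₁ (v₁ + w₁) + L₂ (v₂ + w₂) := by
        rw [hL₁.map_add, hL₂.map_add]; abel
    _ ≤ rieszKantorovich L₁ L₂ (v + w) := add_le_rieszKantorovich (by rw [← hv, ← hw]; abel)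

variable [PartialOrder J₁] [CanonicallyOrderedAdd J₁] [CanonicallyOrderedAdd J₂]

theorem rieszKantorovich_zero (hL₁ : IsLinearMap ℝ≥0 L₁) (hL₂ : IsLinearMap ℝ≥0 L₂) :
    rieszKantorovich L₁ L₂ 0 = 0 :=
  le_antisymm (rieszKantorovich_le_iff.2 fun _ _ h => by
    obtain ⟨rfl, rfl⟩ := add_eq_zero.1 h
    simp [hL₁.map_zero, hL₂.map_zero]) zero_le

theorem rieszKantorovich_smul [IsOrderedModule ℝ≥0 J₂] (hL₁ : IsLinearMap ℝ≥0 L₁)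
    (hL₂ : IsLinearMap ℝ≥0 L₂) (c : ℝ≥0) (v : J₁) :
    rieszKantorovich L₁ L₂ (c • v) = c • rieszKantorovich L₁ L₂ v := by
  rcases eq_or_ne c 0 with rfl | hc
  · simp [rieszKantorovich_zero hL₁ hL₂]
  refine le_antisymm (rieszKantorovich_smul_le hL₁ hL₂ hc v) ?_
  calc c • rieszKantorovich L₁ L₂ v = c • rieszKantorovich L₁ L₂ (c⁻¹ • c • v) := by
        rw [inv_smul_smul₀ hc]
    _ ≤ c • c⁻¹ • rieszKantorovich L₁ L₂ (c • v) := by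
      gcongr
      exact rieszKantorovich_smul_le hL₁ hL₂ (inv_ne_zero hc) _
    _ = rieszKantorovich L₁ L₂ (c • v) := smul_inv_smul₀ hc _

variable [IsOrderedAddMonoid J₂]

theorem rieszKantorovich_le_add (hL₁ : IsLinearMap ℝ≥0 L₁) (hL₂ : IsLinearMap ℝ≥0 L₂)
    (u : J₁) : rieszKantorovich L₁ L₂ u ≤ L₁ u + L₂ u :=
  rieszKantorovich_le_iff.2 fun _ _ h =>
    add_le_add (hL₁.monotone (h ▸ le_self_add)) (hL₂.monotone (h ▸ le_add_self))

theorem rieszKantorovich_mono (hL₁ : IsLinearMap ℝ≥0 L₁) : Monotone (rieszKantorovich L₁ L₂) := by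
  intro v w hvw
  obtain ⟨d, rfl⟩ := exists_add_of_le hvw
  refine rieszKantorovich_le_iff.2 fun v₁ v₂ h => ?_
  calc L₁ v₁ + L₂ v₂ ≤ L₁ (v₁ + d) + L₂ v₂ := by gcongr; exact hL₁.monotone le_self_add
    _ ≤ rieszKantorovich L₁ L₂ (v + d) := add_le_rieszKantorovich (by rw [← h]; abel)

theorem rieszKantorovich_add_le_two_smul (hL₁ : IsLinearMap ℝ≥0 L₁) (hL₂ : IsLinearMap ℝ≥0 L₂)
    (v w : J₁) :
    rieszKantorovich L₁ L₂ (v + w) ≤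
      (2 : ℝ≥0) • (rieszKantorovich L₁ L₂ v + rieszKantorovich L₁ L₂ w) := by
  set L := rieszKantorovich L₁ L₂
  calc L (v + w) ≤ L₁ (v + w) + L₂ (v + w) := rieszKantorovich_le_add hL₁ hL₂ _
    _ = (L₁ v + L₁ w) + (L₂ v + L₂ w) := by rw [hL₁.map_add, hL₂.map_add]
    _ ≤ (L v + L w) + (L v + L w) :=
      add_le_add (add_le_add (le_rieszKantorovich_left hL₂ v) (le_rieszKantorovich_left hL₂ w))
        (add_le_add (le_rieszKantorovich_right hL₁ v) (le_rieszKantorovich_right hL₁ w))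
    _ = (2 : ℝ≥0) • (L v + L w) := (two_smul _ _).symm

end RieszKantorovich

section Additivity

variable {J₁ J₂ : Type*}
  [CompleteLattice J₁] [AddCommMonoid J₁] [IsOrderedAddMonoid J₁] [CanonicallyOrderedAdd J₁]
  [Module ℝ≥0 J₁] [IsOrderedModule ℝ≥0 J₁]
  [CompleteLattice J₂] [AddCommMonoid J₂] [IsOrderedAddMonoid J₂] [CanonicallyOrderedAdd J₂]
  [Module ℝ≥0 J₂] {L₁ L₂ : J₁ → J₂}

theorem AddSInfDistrib.rieszKantorovich_add_le (hinf : AddSInfDistrib J₁)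
    (hL₁ : IsLinearMap ℝ≥0 L₁) (hL₂ : IsLinearMap ℝ≥0 L₂) (a b : J₁) :
    rieszKantorovich L₁ L₂ (a + b) ≤
      rieszKantorovich L₁ L₂ a + rieszKantorovich L₁ L₂ (b + infinitesimalPart a) := by
  refine rieszKantorovich_le_iff.2 fun u₁ u₂ h => ?_
  obtain ⟨z₁₁, z₁₂, z₂₁, z₂₂, rfl, rfl, ha, hb⟩ := hinf.exists_decomposition h
  calc L₁ (z₁₁ + z₁₂) + L₂ (z₂₁ + z₂₂) = (L₁ z₁₁ + L₂ z₂₁) + (L₁ z₁₂ + L₂ z₂₂) := by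
        rw [hL₁.map_add, hL₂.map_add]; abel
    _ ≤ _ := add_le_add (add_le_rieszKantorovich ha)
      ((add_le_rieszKantorovich rfl).trans (rieszKantorovich_mono hL₁ hb))

variable [IsOrderedModule ℝ≥0 J₂]

theorem rieszKantorovich_add (hinf : AddSInfDistrib J₁) (hscale : SMulLowerContinuous J₂)
    (hL₁ : IsLinearMap ℝ≥0 L₁) (hL₂ : IsLinearMap ℝ≥0 L₂) (v w : J₁) :
    rieszKantorovich L₁ L₂ (v + w) = rieszKantorovich L₁ L₂ v + rieszKantorovich L₁ L₂ w := by
  set L := rieszKantorovich L₁ L₂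
  have hε : L (infinitesimalPart v + infinitesimalPart w) ≤ infinitesimalPart (L v + L w) := calc
    _ ≤ L (infinitesimalPart (v + w)) :=
      rieszKantorovich_mono hL₁ (infinitesimalPart_add_le v w)
    _ ≤ infinitesimalPart (L (v + w)) :=
      (rieszKantorovich_mono hL₁).map_infinitesimalPart_le (rieszKantorovich_smul hL₁ hL₂) _
    _ ≤ infinitesimalPart ((2 : ℝ≥0) • (L v + L w)) :=
      infinitesimalPart_mono (rieszKantorovich_add_le_two_smul hL₁ hL₂ v w)
    _ = infinitesimalPart (L v + L w) := infinitesimalPart_smul two_ne_zero _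
  refine le_antisymm ?_ (hscale.rieszKantorovich_add_le hL₁ hL₂ v w)
  calc L (v + w) ≤ L v + L (w + infinitesimalPart v) := hinf.rieszKantorovich_add_le hL₁ hL₂ v w
    _ ≤ L v + (L w + L (infinitesimalPart v + infinitesimalPart w)) := by
      gcongr
      exact hinf.rieszKantorovich_add_le hL₁ hL₂ w _
    _ ≤ (L v + L w) + infinitesimalPart (L v + L w) := by rw [← add_assoc]; gcongr
    _ = L v + L w := hscale.add_infinitesimalPart _

theorem isLinearMap_rieszKantorovich (hinf : AddSInfDistrib J₁) (hscale : SMulLowerContinuous J₂)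
    (hL₁ : IsLinearMap ℝ≥0 L₁) (hL₂ : IsLinearMap ℝ≥0 L₂) :
    IsLinearMap ℝ≥0 (rieszKantorovich L₁ L₂) :=
  ⟨rieszKantorovich_add hinf hscale hL₁ hL₂, rieszKantorovich_smul hL₁ hL₂⟩

end Additivity

theorem stmt11_general {J₁ J₂ : Type*}
    [CompleteLattice J₁] [AddCommMonoid J₁] [Module ℝ≥0 J₁]
    [CompleteLattice J₂] [AddCommMonoid J₂] [Module ℝ≥0 J₂]
    (hle₁ : ∀ x y : J₁, x ≤ y ↔ ∃ z, x + z = y)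
    (hinf₁ : ∀ (v : J₁) (A : Set J₁), sInf ((fun a => v + a) '' A) = v + sInf A)
    (hle₂ : ∀ x y : J₂, x ≤ y ↔ ∃ z, x + z = y)
    (hscale₂ : ∀ v : J₂, IsLUB {w | ∃ η : ℝ≥0, η < 1 ∧ w = η • v} v)
    (L₁ L₂ : J₁ → J₂) (hL₁ : IsConeLinear L₁) (hL₂ : IsConeLinear L₂)
    (L : J₁ → J₂)
    (hLdef : ∀ v : J₁, L v = sSup {z | ∃ v₁ v₂ : J₁, v₁ + v₂ = v ∧ z = L₁ v₁ + L₂ v₂}) :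
    IsConeLinear L ∧ (∀ v, L₁ v ≤ L v) ∧ (∀ v, L₂ v ≤ L v) ∧
      ∀ M : J₁ → J₂, IsConeLinear M → (∀ v, L₁ v ≤ M v) → (∀ v, L₂ v ≤ M v) →
        ∀ v, L v ≤ M v := by
  have := CanonicallyOrderedAdd.of_le_iff_exists_add hle₁
  have := CanonicallyOrderedAdd.of_le_iff_exists_add hle₂
  have := CanonicallyOrderedAdd.toIsOrderedAddMonoid (α := J₁)
  have := CanonicallyOrderedAdd.toIsOrderedAddMonoid (α := J₂)
  have := IsOrderedModule.of_canonicallyOrderedAdd ℝ≥0 (J := J₁)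
  have := IsOrderedModule.of_canonicallyOrderedAdd ℝ≥0 (J := J₂)
  obtain rfl : L = rieszKantorovich L₁ L₂ := funext hLdef
  simp only [isConeLinear_iff_isLinearMap] at hL₁ hL₂ ⊢
  exact ⟨isLinearMap_rieszKantorovich hinf₁ hscale₂ hL₁ hL₂, le_rieszKantorovich_left hL₂,
    le_rieszKantorovich_right hL₁, fun M hM => rieszKantorovich_le_of_le hM⟩

/-- Riesz–Kantorovich formula for the join of two linear maps between cones with joins:
`L v := sup {L₁ v₁ + L₂ v₂ : v₁ + v₂ = v}` is linear, dominates `L₁` and `L₂` pointwise,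
and is the least linear pointwise upper bound of `L₁` and `L₂`. -/
theorem stmt11 {J₁ J₂ : Type*}
    [CompleteLattice J₁] [AddCommMonoid J₁] [Module ℝ≥0 J₁]
    [CompleteLattice J₂] [AddCommMonoid J₂] [Module ℝ≥0 J₂]
    (hle₁ : ∀ x y : J₁, x ≤ y ↔ ∃ z, x + z = y)
    (hscale₁ : ∀ v : J₁, IsLUB {w | ∃ η : ℝ≥0, η < 1 ∧ w = η • v} v)
    (hinf₁ : ∀ (v : J₁) (A : Set J₁), sInf ((fun a => v + a) '' A) = v + sInf A)
    (hle₂ : ∀ x y : J₂, x ≤ y ↔ ∃ z, x + z = y)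
    (hscale₂ : ∀ v : J₂, IsLUB {w | ∃ η : ℝ≥0, η < 1 ∧ w = η • v} v)
    (hinf₂ : ∀ (v : J₂) (A : Set J₂), sInf ((fun a => v + a) '' A) = v + sInf A)
    (L₁ L₂ : J₁ → J₂) (hL₁ : IsConeLinear L₁) (hL₂ : IsConeLinear L₂)
    (L : J₁ → J₂)
    (hLdef : ∀ v : J₁, L v = sSup {z | ∃ v₁ v₂ : J₁, v₁ + v₂ = v ∧ z = L₁ v₁ + L₂ v₂}) :
    IsConeLinear L ∧ (∀ v, L₁ v ≤ L v) ∧ (∀ v, L₂ v ≤ L v) ∧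
      ∀ M : J₁ → J₂, IsConeLinear M → (∀ v, L₁ v ≤ M v) → (∀ v, L₂ v ≤ M v) →
        ∀ v, L v ≤ M v :=
  stmt11_general hle₁ hinf₁ hle₂ hscale₂ L₁ L₂ hL₁ hL₂ L hLdef
end

section
/- Key extension existence lemma: let J be a cone with joins, and A, Ã ⊆ J² sets of pairs such that v ≤ w for all (v,w) ∈ A and v + ṽ ≤ w + w̃ for all (v,w) ∈ A, (ṽ,w̃) ∈ Ã. Then x := inf_{(v,w)∈A} (w − v) satisfies v + x ≤ w for all (v,w) ∈ A and ṽ ≤ w̃ + x for all (ṽ,w̃) ∈ Ã, where w − v := max{z : v + z = w}. -/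
open scoped NNReal

section Aux

variable {J : Type*} [CompleteLattice J] [AddCommMonoid J] [Module ℝ≥0 J]

/-- `ε_v = inf {λ • v : λ > 0}`. -/
private def epsAux (v : J) : J := sInf {x | ∃ l : ℝ≥0, 0 < l ∧ x = l • v}

private lemma le_add_aux (hle : ∀ x y : J, x ≤ y ↔ ∃ z, x + z = y) (a b : J) :
    a ≤ a + b := (hle _ _).2 ⟨b, rfl⟩

private lemma add_le_add_aux (hle : ∀ x y : J, x ≤ y ↔ ∃ z, x + z = y)
    {a b c d : J} (h1 : a ≤ b) (h2 : c ≤ d) : a + c ≤ b + d := by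
  obtain ⟨t, rfl⟩ := (hle a b).1 h1
  obtain ⟨s, rfl⟩ := (hle c d).1 h2
  exact (hle _ _).2 ⟨t + s, by abel⟩

private lemma smul_le_aux (hle : ∀ x y : J, x ≤ y ↔ ∃ z, x + z = y)
    (η : ℝ≥0) {a b : J} (h : a ≤ b) : η • a ≤ η • b := by
  obtain ⟨t, rfl⟩ := (hle a b).1 h
  exact (hle _ _).2 ⟨η • t, by rw [← smul_add]⟩

private lemma smul_le_self_aux (hle : ∀ x y : J, x ≤ y ↔ ∃ z, x + z = y)
    {η : ℝ≥0} (hη : η ≤ 1) (a : J) : η • a ≤ a :=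
  (hle _ _).2 ⟨(1 - η) • a, by rw [← add_smul, add_tsub_cancel_of_le hη, one_smul]⟩

private lemma smul_le_smul_aux (hle : ∀ x y : J, x ≤ y ↔ ∃ z, x + z = y)
    {η l : ℝ≥0} (h : η ≤ l) (a : J) : η • a ≤ l • a :=
  (hle _ _).2 ⟨(l - η) • a, by rw [← add_smul, add_tsub_cancel_of_le h]⟩

private lemma epsAux_le (v : J) {l : ℝ≥0} (hl : 0 < l) : epsAux v ≤ l • v :=
  sInf_le ⟨l, hl, rfl⟩

private lemma add_epsAux (hle : ∀ x y : J, x ≤ y ↔ ∃ z, x + z = y)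
    (hscale : ∀ v : J, IsLUB {w | ∃ η : ℝ≥0, η < 1 ∧ w = η • v} v)
    (v : J) : v + epsAux v = v := by
  refine le_antisymm ?_ (le_add_aux hle v _)
  refine (hscale (v + epsAux v)).2 ?_
  rintro w ⟨η, hη, rfl⟩
  rcases eq_or_ne η 0 with rfl | h0
  · simpa using (hle 0 v).2 ⟨v, zero_add v⟩
  have h1η : (0:ℝ≥0) < 1 - η := tsub_pos_of_lt hη
  have hl : (0:ℝ≥0) < (1 - η) / η := by positivity
  have hmul : η * ((1 - η) / η) = 1 - η := by
    rw [mul_comm, div_mul_cancel₀ _ h0]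
  calc η • (v + epsAux v) ≤ η • (v + ((1 - η) / η) • v) :=
        smul_le_aux hle _ (add_le_add_aux hle le_rfl (epsAux_le v hl))
    _ = (η + (1 - η)) • v := by
        rw [smul_add, smul_smul, hmul, add_smul]
    _ = v := by rw [add_tsub_cancel_of_le hη.le, one_smul]

private lemma cancel_aux (hle : ∀ x y : J, x ≤ y ↔ ∃ z, x + z = y)
    (hscale : ∀ v : J, IsLUB {w | ∃ η : ℝ≥0, η < 1 ∧ w = η • v} v)
    (hinf : ∀ (v : J) (A : Set J), sInf ((fun a => v + a) '' A) = v + sInf A)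
    {v z z₀ : J} (h : v + z = v + z₀) : z ≤ z₀ + epsAux v := by
  have hrw : z₀ + epsAux v
      = sInf ((fun a => z₀ + a) '' {x | ∃ l : ℝ≥0, 0 < l ∧ x = l • v}) :=
    (hinf z₀ _).symm
  refine (hscale z).2 ?_
  rintro w ⟨η, hη, rfl⟩
  rw [hrw]
  refine le_sInf ?_
  rintro _ ⟨_, ⟨l, hl, rfl⟩, rfl⟩
  -- goal : η • z ≤ z₀ + l • v
  rcases eq_or_ne η 0 with rfl | h0
  · simpa using (hle 0 (z₀ + l • v)).2 ⟨z₀ + l • v, zero_add _⟩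
  obtain ⟨j, hj⟩ := exists_nat_ge (η / l)
  have hj1 : (0:ℝ≥0) < (j:ℝ≥0) + 1 := by positivity
  set μ : ℝ≥0 := η / ((j:ℝ≥0) + 1) with hμ
  have hbase : μ • z + μ • v = μ • z₀ + μ • v := by
    have := congrArg (fun x => μ • x) h
    simp only [smul_add] at this
    calc μ • z + μ • v = μ • v + μ • z := by abel
      _ = μ • v + μ • z₀ := this
      _ = μ • z₀ + μ • v := by abel
  have key : ∀ i : ℕ, ((i : ℝ≥0) * μ) • z + μ • v = ((i : ℝ≥0) * μ) • z₀ + μ • v := by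
    intro i
    induction i with
    | zero => simp
    | succ i ih =>
        push_cast
        rw [add_mul, one_mul, add_smul, add_smul]
        calc ((i:ℝ≥0) * μ) • z + μ • z + μ • v
            = ((i:ℝ≥0) * μ) • z + (μ • z₀ + μ • v) := by rw [add_assoc, hbase]
          _ = (((i:ℝ≥0) * μ) • z + μ • v) + μ • z₀ := by abel
          _ = (((i:ℝ≥0) * μ) • z₀ + μ • v) + μ • z₀ := by rw [ih]
          _ = ((i:ℝ≥0) * μ) • z₀ + μ • z₀ + μ • v := by abel
  have hηl : η ≤ l * ((j:ℝ≥0) + 1) := by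
    have : η ≤ (j:ℝ≥0) * l := (div_le_iff₀ hl).1 hj
    calc η ≤ (j:ℝ≥0) * l := this
      _ ≤ l * ((j:ℝ≥0) + 1) := by
          rw [mul_comm]
          exact mul_le_mul_right (le_add_of_nonneg_right zero_le') l
  have hμl : μ ≤ l := by
    rw [hμ, div_le_iff₀ hj1]
    exact hηl
  have hjμ : (((j:ℕ) + 1 : ℕ) : ℝ≥0) * μ = η := by
    push_cast
    rw [hμ, mul_div_cancel₀ _ hj1.ne']
  calc η • z ≤ η • z + μ • v := le_add_aux hle _ _
    _ = ((((j:ℕ) + 1 : ℕ) : ℝ≥0) * μ) • z + μ • v := by rw [hjμ]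
    _ = ((((j:ℕ) + 1 : ℕ) : ℝ≥0) * μ) • z₀ + μ • v := key (j + 1)
    _ = η • z₀ + μ • v := by rw [hjμ]
    _ ≤ z₀ + l • v :=
        add_le_add_aux hle (smul_le_self_aux hle hη.le z₀) (smul_le_smul_aux hle hμl v)

private lemma sSup_diff_aux (hle : ∀ x y : J, x ≤ y ↔ ∃ z, x + z = y)
    (hscale : ∀ v : J, IsLUB {w | ∃ η : ℝ≥0, η < 1 ∧ w = η • v} v)
    (hinf : ∀ (v : J) (A : Set J), sInf ((fun a => v + a) '' A) = v + sInf A)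
    {v w z₀ : J} (h : v + z₀ = w) :
    sSup {z | v + z = w} = z₀ + epsAux v := by
  refine le_antisymm (sSup_le fun z hz => ?_) (le_sSup ?_)
  · exact cancel_aux hle hscale hinf (hz.trans h.symm)
  · show v + (z₀ + epsAux v) = w
    calc v + (z₀ + epsAux v) = (v + epsAux v) + z₀ := by abel
      _ = v + z₀ := by rw [add_epsAux hle hscale]
      _ = w := h

end Aux

/-- Key extension existence lemma in a cone with joins: given sets of pairs `A, Ã ⊆ J²` with
`v ≤ w` for all `(v,w) ∈ A` and `v + ṽ ≤ w + w̃` for all `(v,w) ∈ A`, `(ṽ,w̃) ∈ Ã`, the element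
`x := inf_{(v,w) ∈ A} (w - v)` (with `w - v := sup {z : v + z = w}`, which is a maximum)
satisfies `v + x ≤ w` for all `(v,w) ∈ A` and `ṽ ≤ w̃ + x` for all `(ṽ,w̃) ∈ Ã`. -/
theorem stmt12 {J : Type*} [CompleteLattice J] [AddCommMonoid J] [Module ℝ≥0 J]
    (hle : ∀ x y : J, x ≤ y ↔ ∃ z, x + z = y)
    (hscale : ∀ v : J, IsLUB {w | ∃ η : ℝ≥0, η < 1 ∧ w = η • v} v)
    (hinf : ∀ (v : J) (A : Set J), sInf ((fun a => v + a) '' A) = v + sInf A)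
    (A Atilde : Set (J × J))
    (hA : ∀ p ∈ A, p.1 ≤ p.2)
    (hAA : ∀ p ∈ A, ∀ q ∈ Atilde, p.1 + q.1 ≤ p.2 + q.2) :
    (∀ p ∈ A, p.1 + sSup {z | p.1 + z = p.2} = p.2) ∧
    (∀ p ∈ A,
        p.1 + sInf ((fun p : J × J => sSup {z | p.1 + z = p.2}) '' A) ≤ p.2) ∧
      ∀ q ∈ Atilde,
        q.1 ≤ q.2 + sInf ((fun p : J × J => sSup {z | p.1 + z = p.2}) '' A) := by
  have part1 : ∀ p ∈ A, p.1 + sSup {z | p.1 + z = p.2} = p.2 := by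
    intro p hp
    obtain ⟨z₀, hz⟩ := (hle p.1 p.2).1 (hA p hp)
    rw [sSup_diff_aux hle hscale hinf hz]
    calc p.1 + (z₀ + epsAux p.1) = (p.1 + epsAux p.1) + z₀ := by abel
      _ = p.1 + z₀ := by rw [add_epsAux hle hscale]
      _ = p.2 := hz
  refine ⟨part1, ?_, ?_⟩
  · intro p hp
    have h1 : sInf ((fun p : J × J => sSup {z | p.1 + z = p.2}) '' A)
        ≤ sSup {z | p.1 + z = p.2} := sInf_le ⟨p, hp, rfl⟩
    calc p.1 + sInf ((fun p : J × J => sSup {z | p.1 + z = p.2}) '' A)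
        ≤ p.1 + sSup {z | p.1 + z = p.2} := add_le_add_aux hle le_rfl h1
      _ = p.2 := part1 p hp
  · intro q hq
    rw [← hinf q.2]
    refine le_sInf ?_
    rintro _ ⟨_, ⟨p, hp, rfl⟩, rfl⟩
    show q.1 ≤ q.2 + sSup {z | p.1 + z = p.2}
    obtain ⟨z₀, hz⟩ := (hle p.1 p.2).1 (hA p hp)
    rw [sSup_diff_aux hle hscale hinf hz]
    obtain ⟨t, ht⟩ := (hle _ _).1 (hAA p hp q hq)
    have hc : p.1 + (q.1 + t) = p.1 + (z₀ + q.2) := by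
      calc p.1 + (q.1 + t) = p.1 + q.1 + t := by abel
        _ = p.2 + q.2 := ht
        _ = (p.1 + z₀) + q.2 := by rw [hz]
        _ = p.1 + (z₀ + q.2) := by abel
    have := cancel_aux hle hscale hinf hc
    calc q.1 ≤ q.1 + t := le_add_aux hle _ _
      _ ≤ (z₀ + q.2) + epsAux p.1 := this
      _ = q.2 + (z₀ + epsAux p.1) := by abel
end
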